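/- arXiv:math/0410464 — 3 statements merged into one kernel-verified Lean document; each statement's English description precedes it below -/
import Mathlib

section
/- Let Γ ⊂ ℝⁿ be a full-rank lattice, ℝⁿ = ℝᵏ ⊕ ℝⁿ⁻ᵏ with projections p : ℝⁿ → ℝᵏ and q : ℝⁿ → ℝⁿ⁻ᵏ, and D ⊂ ℝⁿ⁻ᵏ a bounded set with ∂D ∩ q(Γ) = ∅. Assume q restricted to Γ is injective (equivalently Γ ∩ ℝᵏ = {0}) and that D is bounded. Then the set p(Γ ∩ q⁻¹(D)) ⊂ ℝᵏ is uniformly discrete: there exists ρ₂ > 0 such that any two distinct points of it are at distance ≥ ρ₂. -/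
/-!
Differences of points of the model set are again lattice points, whose internal components lie
in the bounded set `D - D`. A discrete lattice has only finitely many points in the bounded region
`‖γ.1‖ ≤ 1, γ.2 ∈ D - D`, so the nonzero physical components of these points stay a positive
distance away from `0`.
-/

open Bornology Metric Pointwise

lemma Set.Finite.exists_pos_le_norm {E : Type*} [NormedAddCommGroup E] {s : Set E}
    (hs : s.Finite) (h0 : (0 : E) ∉ s) : ∃ ρ > 0, ∀ x ∈ s, ρ ≤ ‖x‖ := by
  obtain ⟨ρ, hρ, hball⟩ := Metric.isOpen_iff.1 hs.isClosed.isOpen_compl 0 h0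
  refine ⟨ρ, hρ, fun x hx => ?_⟩
  by_contra! hlt
  exact hball (mem_ball_zero_iff.2 hlt) hx

namespace AddSubgroup

variable {E F : Type*} [NormedAddCommGroup E] [NormedAddCommGroup F] [ProperSpace (E × F)]

lemma exists_pos_le_norm_fst_of_snd_mem (Γ : AddSubgroup (E × F)) [DiscreteTopology Γ]
    {S : Set F} (hS : IsBounded S) :
    ∃ ρ > 0, ∀ γ ∈ Γ, γ.2 ∈ S → γ.1 ≠ 0 → ρ ≤ ‖γ.1‖ := by
  have hfinite : ((closedBall (0 : E) 1 ×ˢ S) ∩ (Γ : Set (E × F))).Finite :=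
    finite_isBounded_inter_isClosed (isDiscrete_iff_discreteTopology.2 ‹_›)
      (isBounded_closedBall.prod hS) isClosed_of_discrete
  obtain ⟨ρ, hρ, hρle⟩ := ((hfinite.image Prod.fst).sdiff (t := {0})).exists_pos_le_norm
    (fun h => h.2 rfl)
  refine ⟨min 1 ρ, lt_min one_pos hρ, fun γ hγ hγS hγ0 => ?_⟩
  rcases le_or_gt 1 ‖γ.1‖ with hlarge | hsmall
  · exact (min_le_left _ _).trans hlarge
  · have hmem : γ.1 ∈ Prod.fst '' ((closedBall (0 : E) 1 ×ˢ S) ∩ (Γ : Set (E × F))) \ {0} :=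
      ⟨⟨γ, ⟨⟨mem_closedBall_zero_iff.2 hsmall.le, hγS⟩, hγ⟩, rfl⟩, hγ0⟩
    exact (min_le_right _ _).trans (hρle _ hmem)

theorem exists_pos_le_norm_sub_fst_of_isBounded (Γ : AddSubgroup (E × F)) [DiscreteTopology Γ]
    {D : Set F} (hD : IsBounded D) :
    ∃ ρ > 0, ∀ g ∈ Γ, ∀ g' ∈ Γ, g.2 ∈ D → g'.2 ∈ D → g.1 ≠ g'.1 → ρ ≤ ‖g.1 - g'.1‖ := by
  obtain ⟨ρ, hρ, hρle⟩ := Γ.exists_pos_le_norm_fst_of_snd_mem (hD.sub hD)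
  exact ⟨ρ, hρ, fun g hg g' hg' hgD hg'D hne =>
    hρle (g - g') (Γ.sub_mem hg hg') (Set.sub_mem_sub hgD hg'D) (sub_ne_zero.2 hne)⟩

end AddSubgroup

theorem stmt_4_general (k l : ℕ) (b : Module.Basis (Fin (k + l)) ℝ ((Fin k → ℝ) × (Fin l → ℝ)))
    (D : Set (Fin l → ℝ)) (hD : Bornology.IsBounded D) :
    ∃ ρ₂ > (0 : ℝ), ∀ g ∈ Submodule.span ℤ (Set.range ⇑b),
      ∀ g' ∈ Submodule.span ℤ (Set.range ⇑b),
        g.2 ∈ D → g'.2 ∈ D → g.1 ≠ g'.1 → ρ₂ ≤ ‖g.1 - g'.1‖ :=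
  have : DiscreteTopology (Submodule.span ℤ (Set.range ⇑b)).toAddSubgroup :=
    inferInstanceAs (DiscreteTopology (Submodule.span ℤ (Set.range ⇑b)))
  (Submodule.span ℤ (Set.range ⇑b)).toAddSubgroup.exists_pos_le_norm_sub_fst_of_isBounded hD

theorem stmt_4 (k l : ℕ) (b : Module.Basis (Fin (k + l)) ℝ ((Fin k → ℝ) × (Fin l → ℝ)))
    (D : Set (Fin l → ℝ)) (hD : Bornology.IsBounded D)
    (hbd : frontier D ∩ {w | ∃ g ∈ Submodule.span ℤ (Set.range ⇑b), Prod.snd g = w} = ∅)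
    (hinj : ∀ g ∈ Submodule.span ℤ (Set.range ⇑b), g.2 = 0 → g = 0) :
    ∃ ρ₂ > (0 : ℝ), ∀ g ∈ Submodule.span ℤ (Set.range ⇑b),
      ∀ g' ∈ Submodule.span ℤ (Set.range ⇑b),
        g.2 ∈ D → g'.2 ∈ D → g.1 ≠ g'.1 → ρ₂ ≤ ‖g.1 - g'.1‖ :=
  stmt_4_general k l b D hD
end

section
/- Let Γ ⊂ ℝⁿ be a full-rank lattice, ℝⁿ = ℝᵏ ⊕ ℝⁿ⁻ᵏ with projections p, q, and let D ⊂ ℝⁿ⁻ᵏ be a bounded set with nonempty interior such that q(Γ) is dense in ℝⁿ⁻ᵏ. Then the model set p(Γ ∩ q⁻¹(D)) is relatively dense in ℝᵏ: there exists ρ₁ > 0 such that every point of ℝᵏ is within distance ρ₁ of a point of the model set. -/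
/-! Pick a ball `B(w₀, ε) ⊆ D` and a covering radius `R` of `Γ`. For `v` in the physical space take
`g ∈ Γ` within `R` of `(v, w₀)`. The internal error `w₀ - q g` lies in the compact ball of radius `R`,
which the density of `q(Γ)` covers by finitely many balls `B(q γ, ε)`, `γ ∈ Γ`. Then `q (g + γ) ∈ D`,
and `p (g + γ)` is within `R + max ‖γ‖` of `v`, a bound independent of `v`. -/

open Set Metric

theorem IsCompact.exists_finite_dist_lt_of_dense_image {α X : Type*} [PseudoMetricSpace X]
    {K : Set X} (hK : IsCompact K) {f : α → X} {S : Set α} (hS : Dense (f '' S))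
    {ε : ℝ} (hε : 0 < ε) : ∃ T ⊆ S, T.Finite ∧ ∀ u ∈ K, ∃ a ∈ T, dist u (f a) < ε := by
  have hcover : K ⊆ ⋃ a ∈ S, ball (f a) ε := fun u _ ↦ by
    obtain ⟨_, ⟨a, ha, rfl⟩, hau⟩ := Metric.mem_closure_iff.1 (hS u) ε hε
    exact mem_iUnion₂.2 ⟨a, ha, hau⟩
  obtain ⟨T, hTS, hT, hKT⟩ := hK.elim_finite_subcover_image (fun _ _ ↦ isOpen_ball) hcover
  exact ⟨T, hTS, hT, fun u hu ↦ by simpa only [mem_iUnion₂, mem_ball, exists_prop] using hKT hu⟩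

theorem AddSubmonoid.exists_mem_snd_mem_norm_fst_sub_le {E F : Type*}
    [SeminormedAddCommGroup E] [SeminormedAddCommGroup F] [ProperSpace F]
    (Γ : AddSubmonoid (E × F)) {R : ℝ} (hR : ∀ x : E × F, ∃ g ∈ Γ, ‖x - g‖ ≤ R)
    (hdense : Dense (Prod.snd '' (Γ : Set (E × F)))) {D : Set F} (hD : (interior D).Nonempty) :
    ∃ ρ > 0, ∀ v : E, ∃ g ∈ Γ, g.2 ∈ D ∧ ‖g.1 - v‖ ≤ ρ := by
  obtain ⟨w₀, ε, hε, hballD⟩ : ∃ w₀, ∃ ε > 0, ball w₀ ε ⊆ D := by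
    obtain ⟨w₀, hw₀⟩ := hD
    obtain ⟨ε, hε, hball⟩ := Metric.isOpen_iff.1 isOpen_interior w₀ hw₀
    exact ⟨w₀, ε, hε, hball.trans interior_subset⟩
  have hR0 : 0 ≤ R := (hR 0).elim fun _ hg ↦ (norm_nonneg _).trans hg.2
  obtain ⟨T, hTΓ, hT, hTnet⟩ := (isCompact_closedBall (0 : F) R).exists_finite_dist_lt_of_dense_image
    hdense hε
  obtain ⟨C, hC, hTC⟩ := hT.isBounded.exists_pos_norm_le
  refine ⟨R + C, by positivity, fun v ↦ ?_⟩
  obtain ⟨g, hgΓ, hg⟩ := hR (v, w₀)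
  obtain ⟨γ, hγT, hγ⟩ := hTnet (w₀ - g.2) (mem_closedBall_zero_iff.2 <|
    (norm_snd_le ((v, w₀) - g)).trans hg)
  refine ⟨g + γ, Γ.add_mem hgΓ (hTΓ hγT), hballD ?_, ?_⟩
  · have hsnd : (g + γ).2 - w₀ = -(w₀ - g.2 - γ.2) := by rw [Prod.snd_add]; abel
    rwa [mem_ball, dist_eq_norm, hsnd, norm_neg, ← dist_eq_norm]
  · calc ‖(g + γ).1 - v‖ = ‖-((v, w₀) - g).1 + γ.1‖ := by
          rw [Prod.fst_add, Prod.fst_sub]; abel_nf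
      _ ≤ ‖(v, w₀) - g‖ + ‖γ‖ := by
        grw [norm_add_le, norm_neg, norm_fst_le, norm_fst_le]
      _ ≤ R + C := add_le_add hg (hTC γ hγT)

theorem stmt_5_general (k l : ℕ) (b : Module.Basis (Fin (k + l)) ℝ ((Fin k → ℝ) × (Fin l → ℝ)))
    (D : Set (Fin l → ℝ))
    (hint : (interior D).Nonempty)
    (hdense : Dense {w : Fin l → ℝ | ∃ g ∈ Submodule.span ℤ (Set.range ⇑b), Prod.snd g = w}) :
    ∃ ρ₁ > (0 : ℝ), ∀ v : Fin k → ℝ,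
      ∃ g ∈ Submodule.span ℤ (Set.range ⇑b), g.2 ∈ D ∧ ‖g.1 - v‖ ≤ ρ₁ :=
  (Submodule.span ℤ (Set.range b)).toAddSubmonoid.exists_mem_snd_mem_norm_fst_sub_le
    (fun x ↦ ⟨ZSpan.floor b x, (ZSpan.floor b x).2, ZSpan.norm_fract_le b x⟩) hdense hint

theorem stmt_5 (k l : ℕ) (b : Module.Basis (Fin (k + l)) ℝ ((Fin k → ℝ) × (Fin l → ℝ)))
    (D : Set (Fin l → ℝ)) (hD : Bornology.IsBounded D)
    (hint : (interior D).Nonempty)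
    (hdense : Dense {w : Fin l → ℝ | ∃ g ∈ Submodule.span ℤ (Set.range ⇑b), Prod.snd g = w}) :
    ∃ ρ₁ > (0 : ℝ), ∀ v : Fin k → ℝ,
      ∃ g ∈ Submodule.span ℤ (Set.range ⇑b), g.2 ∈ D ∧ ‖g.1 - v‖ ≤ ρ₁ :=
  stmt_5_general k l b D hint hdense
end

section
/- Let M₁, M₂ ⊂ 𝕋³ be disjoint closed, connected, embedded orientable surfaces, each representing a nonzero class in H₂(𝕋³, ℤ). Then [M₁] = ±[M₂]. -/
/-- The projection ℝ³ → 𝕋³ = (ℝ/ℤ)³. -/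
noncomputable def torusProj3 : (Fin 3 → ℝ) → (Fin 3 → AddCircle (1 : ℝ)) :=
  fun x i => (x i : AddCircle (1 : ℝ))

open scoped ContDiff
open Set intervalIntegral

namespace Stmt7

/-- periodized bump -/
noncomputable def perBump (b : ContDiffBump (0:ℝ)) : ℝ → ℝ :=
  fun t => b (Int.fract t) + b (Int.fract t - 1)

variable {b : ContDiffBump (0:ℝ)}

lemma perBump_eq (hb : b.rOut ≤ 1/4) (n : ℤ) {t : ℝ}
    (ht : t ∈ Ioo ((n:ℝ) - 3/4) ((n:ℝ) + 1)) :
    perBump b t = b (t - n) + b (t - n - 1) := by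
  obtain ⟨h1, h2⟩ := ht
  rcases le_or_gt (n:ℝ) t with h | h
  · have hf : Int.fract t = t - n := by
      rw [← Int.fract_sub_intCast t n, Int.fract_eq_self.mpr ⟨by linarith, by linarith⟩]
    rw [perBump, hf]
  · have hf : Int.fract t = t - n + 1 := by
      rw [← Int.fract_sub_intCast t (n - 1)]
      rw [show t - ((n:ℤ) - 1 : ℤ) = t - n + 1 by push_cast; ring,
        Int.fract_eq_self.mpr ⟨by linarith, by linarith⟩]
    have z1 : b (t - n + 1) = 0 := by
      apply b.zero_of_le_dist
      rw [Real.dist_eq, sub_zero, abs_of_pos (by linarith)]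
      linarith
    have z2 : b (t - n - 1) = 0 := by
      apply b.zero_of_le_dist
      rw [Real.dist_eq, sub_zero, abs_of_neg (by linarith)]
      linarith
    rw [perBump, hf, show t - n + 1 - 1 = t - n by ring, z1, z2, zero_add, add_zero]

lemma perBump_contDiff (hb : b.rOut ≤ 1/4) : ContDiff ℝ ∞ (perBump b) := by
  rw [contDiff_iff_contDiffAt]
  intro t
  have hmem : t ∈ Ioo ((round t : ℝ) - 3/4) ((round t : ℝ) + 1) := by
    have := abs_sub_round t
    rw [abs_le] at this
    constructor <;> linarith [this.1, this.2]
  have hsm : ContDiff ℝ ∞ (fun s => b (s - round t) + b (s - round t - 1)) :=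
    (b.contDiff.comp (contDiff_id.sub contDiff_const)).add
      (b.contDiff.comp ((contDiff_id.sub contDiff_const).sub contDiff_const))
  refine hsm.contDiffAt.congr_of_eventuallyEq ?_
  filter_upwards [Ioo_mem_nhds hmem.1 hmem.2] with s hs
  exact perBump_eq hb (round t) hs

lemma perBump_periodic : Function.Periodic (perBump b) 1 := by
  intro t
  have : Int.fract (t + (1:ℤ)) = Int.fract t := Int.fract_add_intCast t 1
  simp only [perBump]
  rw [show t + (1:ℝ) = t + ((1:ℤ):ℝ) by norm_num, this]

lemma perBump_nonneg (t : ℝ) : 0 ≤ perBump b t := add_nonneg b.nonneg b.nonneg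

lemma perBump_supp {t : ℝ} (h : perBump b t ≠ 0) : ∃ m : ℤ, |t - m| < b.rOut := by
  by_contra hc
  push_neg at hc
  apply h
  have z1 : b (Int.fract t) = 0 := by
    apply b.zero_of_le_dist
    rw [Real.dist_eq, sub_zero, ← Int.self_sub_floor t]
    exact hc ⌊t⌋
  have z2 : b (Int.fract t - 1) = 0 := by
    apply b.zero_of_le_dist
    rw [Real.dist_eq, sub_zero, ← Int.self_sub_floor t,
      show t - ⌊t⌋ - 1 = t - ((⌊t⌋ + 1 : ℤ) : ℝ) by push_cast; ring]
    exact hc (⌊t⌋ + 1)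
  rw [perBump, z1, z2, add_zero]

lemma perBump_integral_pos (hb : b.rOut ≤ 1/4) :
    0 < ∫ t in (0:ℝ)..1, perBump b t := by
  have hcont : Continuous (perBump b) := (perBump_contDiff hb).continuous
  have hIn : b.rIn ≤ 1 := le_trans b.rIn_lt_rOut.le (by linarith)
  have h1 : ∀ t ∈ Icc (0:ℝ) b.rIn, (1:ℝ) ≤ perBump b t := by
    intro t ⟨ht0, ht1⟩
    have hf : Int.fract t = t := by
      rcases eq_or_lt_of_le ht1 with h | h
      · exact Int.fract_eq_self.mpr ⟨ht0, by linarith [b.rIn_lt_rOut]⟩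
      · exact Int.fract_eq_self.mpr ⟨ht0, by linarith [b.rIn_lt_rOut]⟩
    have : b t = 1 := b.one_of_mem_closedBall (by
      simp [Real.dist_eq, abs_of_nonneg ht0, ht1])
    calc (1:ℝ) = b t := this.symm
    _ ≤ perBump b t := by rw [perBump, hf]; nlinarith [b.nonneg (x := t - 1)]
  have step1 : b.rIn ≤ ∫ t in (0:ℝ)..b.rIn, perBump b t := by
    have := intervalIntegral.integral_mono_on (μ := MeasureTheory.volume) (f := fun _ => (1:ℝ)) (g := perBump b)
      b.rIn_pos.le intervalIntegrable_const (hcont.intervalIntegrable _ _) h1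
    simpa using this
  have step2 : ∫ t in (0:ℝ)..b.rIn, perBump b t ≤ ∫ t in (0:ℝ)..1, perBump b t := by
    apply intervalIntegral.integral_mono_interval (le_refl (0:ℝ)) b.rIn_pos.le hIn
    · filter_upwards with t using perBump_nonneg t
    · exact hcont.intervalIntegrable _ _
  linarith [b.rIn_pos]

/-- antiderivative of the periodized bump -/
noncomputable def phiB (b : ContDiffBump (0:ℝ)) : ℝ → ℝ :=
  fun t => ∫ s in (0:ℝ)..t, perBump b s

lemma phiB_hasDerivAt (hb : b.rOut ≤ 1/4) (t : ℝ) :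
    HasDerivAt (phiB b) (perBump b t) t :=
  ((perBump_contDiff hb).continuous.integral_hasStrictDerivAt 0 t).hasDerivAt

lemma phiB_contDiff (hb : b.rOut ≤ 1/4) : ContDiff ℝ ∞ (phiB b) := by
  rw [contDiff_infty_iff_deriv]
  have hd : deriv (phiB b) = perBump b :=
    funext fun t => (phiB_hasDerivAt hb t).deriv
  exact ⟨fun t => (phiB_hasDerivAt hb t).differentiableAt, by
    rw [hd]; exact perBump_contDiff hb⟩

lemma phiB_shift (hb : b.rOut ≤ 1/4) (t : ℝ) (k : ℤ) :
    phiB b (t + k) = phiB b t + k * ∫ s in (0:ℝ)..1, perBump b s := by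
  have hint : ∀ u v : ℝ, IntervalIntegrable (perBump b) MeasureTheory.volume u v :=
    fun u v => (perBump_contDiff hb).continuous.intervalIntegrable u v
  have hadj : phiB b (t + k) = phiB b t + ∫ s in t..(t + k), perBump b s := by
    rw [phiB, phiB, intervalIntegral.integral_add_adjacent_intervals (hint 0 t) (hint t _)]
  rw [hadj]
  congr 1
  have := (perBump_periodic (b := b)).intervalIntegral_add_zsmul_eq k t
    ((perBump_contDiff hb).continuous.intervalIntegrable)
  simp only [zsmul_eq_mul, mul_one] at this
  rw [this, (perBump_periodic (b := b)).intervalIntegral_add_eq t 0, zero_add]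

lemma one_le_inf : (∞ : WithTop ℕ∞) ≠ 0 := by simp

lemma inf_add_one : (∞ : WithTop ℕ∞) + 1 ≤ ∞ := by
  norm_num

lemma fderiv_shift {u : ℝ × ℝ → ℝ} (hu : ContDiff ℝ ∞ u) (v : ℝ × ℝ) (c : ℝ)
    (hper : ∀ z, u (z + v) = u z + c) (z : ℝ × ℝ) :
    fderiv ℝ u (z + v) = fderiv ℝ u z := by
  have hdiff : Differentiable ℝ u := hu.differentiable one_le_inf
  have h1 : HasFDerivAt (fun w : ℝ × ℝ => u (w + v)) (fderiv ℝ u (z + v)) z := by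
    have := (hdiff (z + v)).hasFDerivAt.comp z ((hasFDerivAt_id z).add_const v)
    exact this
  have h2 : HasFDerivAt (fun w : ℝ × ℝ => u (w + v)) (fderiv ℝ u z) z := by
    have heq : (fun w : ℝ × ℝ => u (w + v)) = fun w => u w + c := funext hper
    rw [heq]
    exact (hdiff z).hasFDerivAt.add_const c
  exact h1.unique h2

lemma lemD {u₁ u₂ : ℝ × ℝ → ℝ} (h₁ : ContDiff ℝ ∞ u₁) (h₂ : ContDiff ℝ ∞ u₂)
    (a₁ b₁ a₂ b₂ : ℝ)
    (p₁ : ∀ z : ℝ × ℝ, u₁ (z + (1,0)) = u₁ z + a₁)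
    (q₁ : ∀ z : ℝ × ℝ, u₁ (z + (0,1)) = u₁ z + b₁)
    (p₂ : ∀ z : ℝ × ℝ, u₂ (z + (1,0)) = u₂ z + a₂)
    (q₂ : ∀ z : ℝ × ℝ, u₂ (z + (0,1)) = u₂ z + b₂) :
    (∫ x in (0:ℝ)..1, ∫ y in (0:ℝ)..1,
      (fderiv ℝ u₁ (x,y) (1,0) * fderiv ℝ u₂ (x,y) (0,1)
        - fderiv ℝ u₁ (x,y) (0,1) * fderiv ℝ u₂ (x,y) (1,0)))
      = a₁ * b₂ - a₂ * b₁ := by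
  have hd₁ : Differentiable ℝ u₁ := h₁.differentiable one_le_inf
  have hd₂ : Differentiable ℝ u₂ := h₂.differentiable one_le_inf
  have hcd : ContDiff ℝ ∞ (fderiv ℝ u₂) := h₂.fderiv_right inf_add_one
  have hcd1 : ContDiff ℝ ∞ (fun z => fderiv ℝ u₂ z (1,0)) := hcd.clm_apply contDiff_const
  have hcd2 : ContDiff ℝ ∞ (fun z => fderiv ℝ u₂ z (0,1)) := hcd.clm_apply contDiff_const
  have hcd1' : ContDiff ℝ ∞ (fun z => fderiv ℝ u₁ z (1,0)) :=
    (h₁.fderiv_right inf_add_one).clm_apply contDiff_const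
  have hcd2' : ContDiff ℝ ∞ (fun z => fderiv ℝ u₁ z (0,1)) :=
    (h₁.fderiv_right inf_add_one).clm_apply contDiff_const
  set F : ℝ × ℝ → ℝ := fun z => u₁ z * fderiv ℝ u₂ z (0,1) with hFdef
  set G : ℝ × ℝ → ℝ := fun z => -(u₁ z * fderiv ℝ u₂ z (1,0)) with hGdef
  set F' : ℝ × ℝ → (ℝ × ℝ) →L[ℝ] ℝ := fun z =>
    u₁ z • fderiv ℝ (fun w => fderiv ℝ u₂ w (0,1)) z + fderiv ℝ u₂ z (0,1) • fderiv ℝ u₁ z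
    with hF'def
  set G' : ℝ × ℝ → (ℝ × ℝ) →L[ℝ] ℝ := fun z =>
    -(u₁ z • fderiv ℝ (fun w => fderiv ℝ u₂ w (1,0)) z + fderiv ℝ u₂ z (1,0) • fderiv ℝ u₁ z)
    with hG'def
  have hFd : ∀ z, HasFDerivAt F (F' z) z := by
    intro z
    exact (hd₁ z).hasFDerivAt.mul ((hcd2.differentiable one_le_inf z).hasFDerivAt)
  have hGd : ∀ z, HasFDerivAt G (G' z) z := by
    intro z
    exact ((hd₁ z).hasFDerivAt.mul ((hcd1.differentiable one_le_inf z).hasFDerivAt)).neg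
  -- the key pointwise identity
  have key : ∀ z : ℝ × ℝ, F' z (1,0) + G' z (0,1)
      = fderiv ℝ u₁ z (1,0) * fderiv ℝ u₂ z (0,1)
        - fderiv ℝ u₁ z (0,1) * fderiv ℝ u₂ z (1,0) := by
    intro z
    have hA : HasFDerivAt (fderiv ℝ u₂) (fderiv ℝ (fderiv ℝ u₂) z) z :=
      ((hcd.differentiable one_le_inf) z).hasFDerivAt
    have e2 : fderiv ℝ (fun w => fderiv ℝ u₂ w (0,1)) z
        = (fderiv ℝ (fderiv ℝ u₂) z).flip ((0:ℝ),(1:ℝ)) := by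
      rw [fderiv_clm_apply (hcd.differentiable one_le_inf z) (differentiableAt_const _)]
      simp
    have e1 : fderiv ℝ (fun w => fderiv ℝ u₂ w (1,0)) z
        = (fderiv ℝ (fderiv ℝ u₂) z).flip ((1:ℝ),(0:ℝ)) := by
      rw [fderiv_clm_apply (hcd.differentiable one_le_inf z) (differentiableAt_const _)]
      simp
    have symm := second_derivative_symmetric (fun y => (hd₂ y).hasFDerivAt) hA
      ((1:ℝ),(0:ℝ)) ((0:ℝ),(1:ℝ))
    simp only [hF'def, hG'def, e1, e2, ContinuousLinearMap.add_apply,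
      ContinuousLinearMap.neg_apply, ContinuousLinearMap.smul_apply,
      ContinuousLinearMap.flip_apply, smul_eq_mul]
    rw [symm]
    ring
  have hJcont : Continuous (fun z : ℝ × ℝ => fderiv ℝ u₁ z (1,0) * fderiv ℝ u₂ z (0,1)
      - fderiv ℝ u₁ z (0,1) * fderiv ℝ u₂ z (1,0)) :=
    ((hcd1'.continuous.mul hcd2.continuous).sub
      (hcd2'.continuous.mul hcd1.continuous))
  have Hi : MeasureTheory.IntegrableOn (fun z : ℝ × ℝ => F' z (1,0) + G' z (0,1))
      ((Set.uIcc (0:ℝ) 1) ×ˢ (Set.uIcc (0:ℝ) 1)) := by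
    have : (fun z : ℝ × ℝ => F' z (1,0) + G' z (0,1))
        = fun z => fderiv ℝ u₁ z (1,0) * fderiv ℝ u₂ z (0,1)
          - fderiv ℝ u₁ z (0,1) * fderiv ℝ u₂ z (1,0) := funext key
    rw [this]
    exact hJcont.continuousOn.integrableOn_compact (isCompact_uIcc.prod isCompact_uIcc)
  have hdiv := MeasureTheory.integral2_divergence_prod_of_hasFDerivAt_off_countable
    F G F' G' 0 0 1 1 ∅ Set.countable_empty
    ((h₁.continuous.mul hcd2.continuous).continuousOn)
    ((h₁.continuous.mul hcd1.continuous).neg.continuousOn)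
    (fun z _ => hFd z) (fun z _ => hGd z) Hi
  simp only [key] at hdiv
  rw [hdiv]
  -- shift invariance of the derivative of u₂
  have shiftP : ∀ z : ℝ × ℝ, fderiv ℝ u₂ (z + (1,0)) = fderiv ℝ u₂ z :=
    fderiv_shift h₂ _ _ p₂
  have shiftQ : ∀ z : ℝ × ℝ, fderiv ℝ u₂ (z + (0,1)) = fderiv ℝ u₂ z :=
    fderiv_shift h₂ _ _ q₂
  -- edge identities
  have eF : ∀ y : ℝ, F (1, y) = F (0, y) + a₁ * fderiv ℝ u₂ (0, y) (0,1) := by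
    intro y
    have hz : ((0:ℝ), y) + ((1:ℝ), (0:ℝ)) = (1, y) := by simp
    have h1 : u₁ (1, y) = u₁ (0, y) + a₁ := by rw [← hz]; exact p₁ _
    have h2 : fderiv ℝ u₂ (1, y) = fderiv ℝ u₂ (0, y) := by rw [← hz]; exact shiftP _
    simp only [hFdef, h1, h2]
    ring
  have eG : ∀ x : ℝ, G (x, 1) = G (x, 0) - b₁ * fderiv ℝ u₂ (x, 0) (1,0) := by
    intro x
    have hz : ((x:ℝ), (0:ℝ)) + ((0:ℝ), (1:ℝ)) = (x, 1) := by simp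
    have h1 : u₁ (x, 1) = u₁ (x, 0) + b₁ := by rw [← hz]; exact q₁ _
    have h2 : fderiv ℝ u₂ (x, 1) = fderiv ℝ u₂ (x, 0) := by rw [← hz]; exact shiftQ _
    simp only [hGdef, h1, h2]
    ring
  -- FTC on the edges
  have hFTC1 : (∫ y in (0:ℝ)..1, fderiv ℝ u₂ (0, y) (0,1)) = b₂ := by
    have hw : ∀ y : ℝ, HasDerivAt (fun y => u₂ (0, y)) (fderiv ℝ u₂ (0, y) (0,1)) y := by
      intro y
      have hline : HasDerivAt (fun y : ℝ => ((0:ℝ), y)) (((0:ℝ), (1:ℝ))) y := by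
        simpa using (hasDerivAt_const y (0:ℝ)).prodMk (hasDerivAt_id y)
      exact (hd₂ (0, y)).hasFDerivAt.comp_hasDerivAt y hline
    have hcont : Continuous (fun y : ℝ => fderiv ℝ u₂ (0, y) (0,1)) := by
      exact hcd2.continuous.comp (continuous_const.prodMk continuous_id)
    rw [intervalIntegral.integral_eq_sub_of_hasDerivAt (fun y _ => hw y)
      (hcont.intervalIntegrable 0 1)]
    have hz : ((0:ℝ), (0:ℝ)) + ((0:ℝ), (1:ℝ)) = ((0:ℝ), (1:ℝ)) := by simp
    have := q₂ ((0:ℝ), (0:ℝ))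
    rw [hz] at this
    rw [this]; ring
  have hFTC2 : (∫ x in (0:ℝ)..1, fderiv ℝ u₂ (x, 0) (1,0)) = a₂ := by
    have hw : ∀ x : ℝ, HasDerivAt (fun x => u₂ (x, 0)) (fderiv ℝ u₂ (x, 0) (1,0)) x := by
      intro x
      have hline : HasDerivAt (fun x : ℝ => (x, (0:ℝ))) (((1:ℝ), (0:ℝ))) x := by
        simpa using (hasDerivAt_id x).prodMk (hasDerivAt_const x (0:ℝ))
      exact (hd₂ (x, 0)).hasFDerivAt.comp_hasDerivAt x hline
    have hcont : Continuous (fun x : ℝ => fderiv ℝ u₂ (x, 0) (1,0)) := by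
      exact hcd1.continuous.comp (continuous_id.prodMk continuous_const)
    rw [intervalIntegral.integral_eq_sub_of_hasDerivAt (fun x _ => hw x)
      (hcont.intervalIntegrable 0 1)]
    have hz : ((0:ℝ), (0:ℝ)) + ((1:ℝ), (0:ℝ)) = ((1:ℝ), (0:ℝ)) := by simp
    have := p₂ ((0:ℝ), (0:ℝ))
    rw [hz] at this
    rw [this]; ring
  -- integrability of edge functions
  have hF0 : IntervalIntegrable (fun y : ℝ => F (0, y)) MeasureTheory.volume 0 1 :=
    ((h₁.continuous.mul hcd2.continuous).comp (continuous_const.prodMk continuous_id)).intervalIntegrable 0 1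
  have hG0 : IntervalIntegrable (fun x : ℝ => G (x, 0)) MeasureTheory.volume 0 1 :=
    ((h₁.continuous.mul hcd1.continuous).neg.comp (continuous_id.prodMk continuous_const)).intervalIntegrable 0 1
  have hd2e : IntervalIntegrable (fun y : ℝ => fderiv ℝ u₂ (0, y) (0,1))
      MeasureTheory.volume 0 1 :=
    (hcd2.continuous.comp (continuous_const.prodMk continuous_id)).intervalIntegrable 0 1
  have hd1e : IntervalIntegrable (fun x : ℝ => fderiv ℝ u₂ (x, 0) (1,0))
      MeasureTheory.volume 0 1 :=
    (hcd1.continuous.comp (continuous_id.prodMk continuous_const)).intervalIntegrable 0 1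
  have hIF : (∫ y in (0:ℝ)..1, F (1, y))
      = (∫ y in (0:ℝ)..1, F (0, y)) + a₁ * b₂ := by
    rw [show (fun y : ℝ => F (1, y)) = fun y => F (0, y) + a₁ * fderiv ℝ u₂ (0, y) (0,1)
        from funext eF]
    rw [intervalIntegral.integral_add hF0 (hd2e.const_mul a₁),
      intervalIntegral.integral_const_mul, hFTC1]
  have hIG : (∫ x in (0:ℝ)..1, G (x, 1))
      = (∫ x in (0:ℝ)..1, G (x, 0)) - b₁ * a₂ := by
    rw [show (fun x : ℝ => G (x, 1)) = fun x => G (x, 0) - b₁ * fderiv ℝ u₂ (x, 0) (1,0)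
        from funext eG]
    rw [intervalIntegral.integral_sub hG0 (hd1e.const_mul b₁),
      intervalIntegral.integral_const_mul, hFTC2]
  rw [hIF, hIG]
  ring

lemma coe_addCircle_int (x : ℝ) (k : ℤ) : ((x + k : ℝ) : AddCircle (1:ℝ)) = (x : AddCircle (1:ℝ)) := by
  have : ((k : ℝ) : AddCircle (1:ℝ)) = 0 := by
    rw [AddCircle.coe_eq_zero_iff]
    exact ⟨k, by simp⟩
  rw [show ((x + k : ℝ) : AddCircle (1:ℝ)) = (x : AddCircle (1:ℝ)) + ((k:ℝ) : AddCircle (1:ℝ))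
    from rfl, this, add_zero]

lemma norm_addCircle_eq (x : ℝ) : ‖(x : AddCircle (1:ℝ))‖ = |x - round x| := by
  rw [AddCircle.norm_eq]; norm_num

lemma norm_addCircle_le (x : ℝ) (k : ℤ) : ‖(x : AddCircle (1:ℝ))‖ ≤ |x - k| := by
  rw [norm_addCircle_eq]; exact round_le x k

lemma norm_addCircle_zero {x : ℝ} (h : ‖(x : AddCircle (1:ℝ))‖ = 0) : ∃ k : ℤ, x = k := by
  rw [norm_addCircle_eq, abs_eq_zero, sub_eq_zero] at h
  exact ⟨round x, h⟩

lemma lemB {g₁ g₂ : ℝ × ℝ → ℝ} (h₁ : ContDiff ℝ ∞ g₁) (h₂ : ContDiff ℝ ∞ g₂)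
    (a b c d : ℤ)
    (per₁ : ∀ (z : ℝ × ℝ) (m n : ℤ), g₁ (z.1 + m, z.2 + n) = g₁ z + ((a * m + b * n : ℤ) : ℝ))
    (per₂ : ∀ (z : ℝ × ℝ) (m n : ℤ), g₂ (z.1 + m, z.2 + n) = g₂ z + ((c * m + d * n : ℤ) : ℝ))
    (avoid : ∀ z : ℝ × ℝ, ¬((∃ k : ℤ, g₁ z = k) ∧ (∃ k : ℤ, g₂ z = k))) :
    a * d = b * c := by
  have hd₁ : Differentiable ℝ g₁ := h₁.differentiable one_le_inf
  have hd₂ : Differentiable ℝ g₂ := h₂.differentiable one_le_inf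
  -- the margin
  set Θ : ℝ × ℝ → ℝ :=
    fun z => ‖(g₁ z : AddCircle (1:ℝ))‖ + ‖(g₂ z : AddCircle (1:ℝ))‖ with hΘdef
  have hcoe : Continuous ((↑) : ℝ → AddCircle (1:ℝ)) := AddCircle.continuous_mk' 1
  have hΘc : Continuous Θ :=
    ((continuous_norm.comp (hcoe.comp h₁.continuous)).add
      (continuous_norm.comp (hcoe.comp h₂.continuous)))
  have hΘpos : ∀ z, 0 < Θ z := by
    intro z
    rcases lt_or_eq_of_le (add_nonneg (norm_nonneg _) (norm_nonneg _) :
      (0:ℝ) ≤ Θ z) with h | h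
    · exact h
    · exfalso
      have h' : (0:ℝ) = ‖(g₁ z : AddCircle (1:ℝ))‖ + ‖(g₂ z : AddCircle (1:ℝ))‖ := h
      have n1 := norm_nonneg (g₁ z : AddCircle (1:ℝ))
      have n2 := norm_nonneg (g₂ z : AddCircle (1:ℝ))
      have h1 : ‖(g₁ z : AddCircle (1:ℝ))‖ = 0 := by linarith
      have h2 : ‖(g₂ z : AddCircle (1:ℝ))‖ = 0 := by linarith
      exact avoid z ⟨norm_addCircle_zero h1, norm_addCircle_zero h2⟩
  obtain ⟨z₀, hz₀K, hz₀min⟩ :=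
    (isCompact_Icc (a := ((0:ℝ),(0:ℝ))) (b := ((1:ℝ),(1:ℝ)))).exists_isMinOn
      ⟨((0:ℝ),(0:ℝ)), by constructor <;> constructor <;> norm_num⟩ hΘc.continuousOn
  set ε := Θ z₀ with hεdef
  have hε : 0 < ε := hΘpos z₀
  -- periodicity of Θ
  have hΘshift : ∀ (z : ℝ × ℝ) (m n : ℤ), Θ (z.1 + m, z.2 + n) = Θ z := by
    intro z m n
    have e1 : ((g₁ (z.1 + m, z.2 + n) : ℝ) : AddCircle (1:ℝ)) = (g₁ z : AddCircle (1:ℝ)) := by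
      rw [per₁ z m n]
      exact coe_addCircle_int _ _
    have e2 : ((g₂ (z.1 + m, z.2 + n) : ℝ) : AddCircle (1:ℝ)) = (g₂ z : AddCircle (1:ℝ)) := by
      rw [per₂ z m n]
      exact coe_addCircle_int _ _
    simp only [hΘdef, e1, e2]
  have hΘlb : ∀ z, ε ≤ Θ z := by
    intro z
    have hw : (Int.fract z.1, Int.fract z.2) ∈ Icc ((0:ℝ),(0:ℝ)) ((1:ℝ),(1:ℝ)) := by
      constructor <;> constructor
      · exact Int.fract_nonneg _
      · exact Int.fract_nonneg _
      · exact (Int.fract_lt_one _).le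
      · exact (Int.fract_lt_one _).le
    have := hz₀min hw
    have heq : Θ (Int.fract z.1 + ⌊z.1⌋, Int.fract z.2 + ⌊z.2⌋) = Θ (Int.fract z.1, Int.fract z.2) :=
      hΘshift (Int.fract z.1, Int.fract z.2) ⌊z.1⌋ ⌊z.2⌋
    have hz : (Int.fract z.1 + (⌊z.1⌋:ℝ), Int.fract z.2 + (⌊z.2⌋:ℝ)) = z :=
      Prod.ext_iff.mpr ⟨Int.fract_add_floor z.1, Int.fract_add_floor z.2⟩
    rw [hz] at heq
    rw [heq]
    exact this
  -- the bump
  obtain ⟨δ, hδpos, hδ14, hδε⟩ : ∃ δ : ℝ, 0 < δ ∧ δ ≤ 1/4 ∧ 2*δ ≤ ε := by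
    refine ⟨min (ε/2) (1/4), lt_min (half_pos hε) (by norm_num), min_le_right _ _, ?_⟩
    have := min_le_left (ε/2) (1/4)
    linarith
  set bb : ContDiffBump (0:ℝ) := ⟨δ/2, δ, by linarith, by linarith⟩ with hbbdef
  have hbOut : bb.rOut ≤ 1/4 := hδ14
  have hprod : ∀ z : ℝ × ℝ, perBump bb (g₁ z) * perBump bb (g₂ z) = 0 := by
    intro z
    by_contra hne
    have hne1 : perBump bb (g₁ z) ≠ 0 := fun h => hne (by rw [h, zero_mul])
    have hne2 : perBump bb (g₂ z) ≠ 0 := fun h => hne (by rw [h, mul_zero])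
    obtain ⟨k₁, hk₁⟩ := perBump_supp hne1
    obtain ⟨k₂, hk₂⟩ := perBump_supp hne2
    have hb1 : ‖(g₁ z : AddCircle (1:ℝ))‖ ≤ |g₁ z - k₁| := norm_addCircle_le _ _
    have hb2 : ‖(g₂ z : AddCircle (1:ℝ))‖ ≤ |g₂ z - k₂| := norm_addCircle_le _ _
    have hΘz : Θ z = ‖(g₁ z : AddCircle (1:ℝ))‖ + ‖(g₂ z : AddCircle (1:ℝ))‖ := rfl
    have hOut : bb.rOut = δ := rfl
    rw [hOut] at hk₁ hk₂
    have hlt : Θ z < 2 * δ := by rw [hΘz]; linarith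
    linarith [hΘlb z]
  -- the antiderivative
  set c₀ : ℝ := ∫ t in (0:ℝ)..1, perBump bb t with hc₀def
  have hc₀ : 0 < c₀ := perBump_integral_pos hbOut
  set u₁ : ℝ × ℝ → ℝ := fun z => phiB bb (g₁ z) with hu₁def
  set u₂ : ℝ × ℝ → ℝ := fun z => phiB bb (g₂ z) with hu₂def
  have hU₁ : ContDiff ℝ ∞ u₁ := (phiB_contDiff hbOut).comp h₁
  have hU₂ : ContDiff ℝ ∞ u₂ := (phiB_contDiff hbOut).comp h₂
  -- unit shifts
  have P₁ : ∀ z : ℝ × ℝ, u₁ (z + (1,0)) = u₁ z + (a : ℝ) * c₀ := by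
    intro z
    have hz : z + ((1:ℝ),(0:ℝ)) = (z.1 + ((1:ℤ):ℝ), z.2 + ((0:ℤ):ℝ)) := by
      simp [Prod.ext_iff]
    rw [hu₁def]
    simp only
    rw [hz, per₁ z 1 0]
    rw [show ((a * 1 + b * 0 : ℤ) : ℝ) = ((a:ℤ):ℝ) by push_cast; ring]
    rw [phiB_shift hbOut]
  have Q₁ : ∀ z : ℝ × ℝ, u₁ (z + (0,1)) = u₁ z + (b : ℝ) * c₀ := by
    intro z
    have hz : z + ((0:ℝ),(1:ℝ)) = (z.1 + ((0:ℤ):ℝ), z.2 + ((1:ℤ):ℝ)) := by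
      simp [Prod.ext_iff]
    rw [hu₁def]
    simp only
    rw [hz, per₁ z 0 1]
    rw [show ((a * 0 + b * 1 : ℤ) : ℝ) = ((b:ℤ):ℝ) by push_cast; ring]
    rw [phiB_shift hbOut]
  have P₂ : ∀ z : ℝ × ℝ, u₂ (z + (1,0)) = u₂ z + (c : ℝ) * c₀ := by
    intro z
    have hz : z + ((1:ℝ),(0:ℝ)) = (z.1 + ((1:ℤ):ℝ), z.2 + ((0:ℤ):ℝ)) := by
      simp [Prod.ext_iff]
    rw [hu₂def]
    simp only
    rw [hz, per₂ z 1 0]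
    rw [show ((c * 1 + d * 0 : ℤ) : ℝ) = ((c:ℤ):ℝ) by push_cast; ring]
    rw [phiB_shift hbOut]
  have Q₂ : ∀ z : ℝ × ℝ, u₂ (z + (0,1)) = u₂ z + (d : ℝ) * c₀ := by
    intro z
    have hz : z + ((0:ℝ),(1:ℝ)) = (z.1 + ((0:ℤ):ℝ), z.2 + ((1:ℤ):ℝ)) := by
      simp [Prod.ext_iff]
    rw [hu₂def]
    simp only
    rw [hz, per₂ z 0 1]
    rw [show ((c * 0 + d * 1 : ℤ) : ℝ) = ((d:ℤ):ℝ) by push_cast; ring]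
    rw [phiB_shift hbOut]
  have hmain := lemD hU₁ hU₂ ((a:ℝ) * c₀) ((b:ℝ) * c₀) ((c:ℝ) * c₀) ((d:ℝ) * c₀) P₁ Q₁ P₂ Q₂
  -- the integrand vanishes identically
  have hfd₁ : ∀ z : ℝ × ℝ, fderiv ℝ u₁ z = perBump bb (g₁ z) • fderiv ℝ g₁ z := by
    intro z
    exact ((phiB_hasDerivAt hbOut (g₁ z)).comp_hasFDerivAt z (hd₁ z).hasFDerivAt).fderiv
  have hfd₂ : ∀ z : ℝ × ℝ, fderiv ℝ u₂ z = perBump bb (g₂ z) • fderiv ℝ g₂ z := by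
    intro z
    exact ((phiB_hasDerivAt hbOut (g₂ z)).comp_hasFDerivAt z (hd₂ z).hasFDerivAt).fderiv
  have hzero : ∀ z : ℝ × ℝ, fderiv ℝ u₁ z (1,0) * fderiv ℝ u₂ z (0,1)
      - fderiv ℝ u₁ z (0,1) * fderiv ℝ u₂ z (1,0) = 0 := by
    intro z
    rw [hfd₁ z, hfd₂ z]
    simp only [ContinuousLinearMap.smul_apply, smul_eq_mul]
    linear_combination ((fderiv ℝ g₁ z) (1,0) * (fderiv ℝ g₂ z) (0,1)
      - (fderiv ℝ g₁ z) (0,1) * (fderiv ℝ g₂ z) (1,0)) * hprod z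
  have hL : (∫ x in (0:ℝ)..1, ∫ y in (0:ℝ)..1,
      (fderiv ℝ u₁ (x,y) (1,0) * fderiv ℝ u₂ (x,y) (0,1)
        - fderiv ℝ u₁ (x,y) (0,1) * fderiv ℝ u₂ (x,y) (1,0))) = 0 := by
    have : ∀ x y : ℝ, (fderiv ℝ u₁ (x,y) (1,0) * fderiv ℝ u₂ (x,y) (0,1)
        - fderiv ℝ u₁ (x,y) (0,1) * fderiv ℝ u₂ (x,y) (1,0)) = 0 := fun x y => hzero (x,y)
    simp only [this, intervalIntegral.integral_zero]
  rw [hL] at hmain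
  have : ((a * d : ℤ) : ℝ) * (c₀ * c₀) = ((b * c : ℤ) : ℝ) * (c₀ * c₀) := by
    push_cast
    linear_combination (-1 : ℝ) * hmain
  have h2 : ((a * d : ℤ) : ℝ) = ((b * c : ℤ) : ℝ) :=
    mul_right_cancel₀ (by positivity) this
  exact_mod_cast h2

lemma sum_mv (μ : Fin 3 → ℤ) {i j : Fin 3} (hij : i ≠ j) (m n : ℤ) :
    ∑ k, μ k * (if k = i then m else if k = j then n else 0) = μ i * m + μ j * n := by
  have hsplit : ∀ k : Fin 3, μ k * (if k = i then m else if k = j then n else 0)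
      = (if k = i then μ k * m else 0) + (if k = j then μ k * n else 0) := by
    intro k
    by_cases h1 : k = i
    · subst h1
      rw [if_pos rfl, if_pos rfl, if_neg hij, add_zero]
    · by_cases h2 : k = j
      · subst h2
        rw [if_neg h1, if_pos rfl, if_neg h1, if_pos rfl, zero_add]
      · rw [if_neg h1, if_neg h2, if_neg h1, if_neg h2, add_zero, mul_zero]
  rw [Finset.sum_congr rfl (fun k _ => hsplit k), Finset.sum_add_distrib,
    Finset.sum_ite_eq' Finset.univ i (fun k => μ k * m),
    Finset.sum_ite_eq' Finset.univ j (fun k => μ k * n)]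
  simp

lemma cross_vanish (μ ν : Fin 3 → ℤ) (U V : (Fin 3 → ℝ) → ℝ)
    (hU : ContDiff ℝ ∞ U) (hV : ContDiff ℝ ∞ V)
    (hUper : ∀ (x : Fin 3 → ℝ) (m : Fin 3 → ℤ),
      U (x + fun i => (m i : ℝ)) = U x + ∑ i, (μ i : ℝ) * (m i : ℝ))
    (hVper : ∀ (x : Fin 3 → ℝ) (m : Fin 3 → ℤ),
      V (x + fun i => (m i : ℝ)) = V x + ∑ i, (ν i : ℝ) * (m i : ℝ))
    (hpt : ∀ x, ¬((∃ z : ℤ, U x = (z:ℝ)) ∧ (∃ z : ℤ, V x = (z:ℝ)))) :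
    ∀ i j, μ i * ν j = μ j * ν i := by
  intro i j
  rcases eq_or_ne i j with rfl | hij
  · ring
  set eI : Fin 3 → ℝ := fun k => if k = i then 1 else 0 with heI
  set eJ : Fin 3 → ℝ := fun k => if k = j then 1 else 0 with heJ
  set base : ℝ × ℝ → (Fin 3 → ℝ) := fun z k => z.1 * eI k + z.2 * eJ k with hbase
  have hbasec : ContDiff ℝ ∞ base := by
    apply contDiff_pi.mpr
    intro k
    exact (contDiff_fst.mul contDiff_const).add (contDiff_snd.mul contDiff_const)
  have key : ∀ (m n : ℤ) (z : ℝ × ℝ),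
      base (z.1 + (m:ℝ), z.2 + (n:ℝ)) = base z
        + (fun k => (((if k = i then m else if k = j then n else 0 : ℤ)) : ℝ)) := by
    intro m n z
    funext k
    have hcast : (((if k = i then m else if k = j then n else 0 : ℤ)) : ℝ)
        = (m:ℝ) * eI k + (n:ℝ) * eJ k := by
      by_cases h1 : k = i
      · subst h1
        simp [heI, heJ, if_neg hij]
      · by_cases h2 : k = j
        · subst h2
          simp [heI, heJ, h1]
        · simp [heI, heJ, h1, h2]
    simp only [hbase, Pi.add_apply]
    rw [hcast]
    ring
  have perU : ∀ (z : ℝ × ℝ) (m n : ℤ),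
      U (base (z.1 + (m:ℝ), z.2 + (n:ℝ))) = U (base z) + ((μ i * m + μ j * n : ℤ) : ℝ) := by
    intro z m n
    rw [key m n z, hUper (base z)]
    congr 1
    rw [← sum_mv μ hij m n]
    push_cast
    rfl
  have perV : ∀ (z : ℝ × ℝ) (m n : ℤ),
      V (base (z.1 + (m:ℝ), z.2 + (n:ℝ))) = V (base z) + ((ν i * m + ν j * n : ℤ) : ℝ) := by
    intro z m n
    rw [key m n z, hVper (base z)]
    congr 1
    rw [← sum_mv ν hij m n]
    push_cast
    rfl
  exact lemB (hU.comp hbasec) (hV.comp hbasec) (μ i) (μ j) (ν i) (ν j)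
    (fun z m n => perU z m n) (fun z m n => perV z m n)
    (fun z => hpt (base z))

lemma exists_rep (p : Fin 3 → AddCircle (1:ℝ)) : ∃ x : Fin 3 → ℝ, torusProj3 x = p := by
  have h : ∀ i, ∃ t : ℝ, (t : AddCircle (1:ℝ)) = p i :=
    fun i => QuotientAddGroup.mk_surjective (p i)
  choose x hx using h
  exact ⟨x, funext hx⟩

lemma torus_eq_iff (x y : Fin 3 → ℝ) :
    torusProj3 x = torusProj3 y ↔ ∃ m : Fin 3 → ℤ, ∀ i, y i = x i + m i := by
  constructor
  · intro h
    have h' : ∀ i, (x i : AddCircle (1:ℝ)) = (y i : AddCircle (1:ℝ)) :=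
      fun i => congrFun h i
    have h2 : ∀ i, ∃ k : ℤ, y i = x i + k := by
      intro i
      have hmem : -x i + y i ∈ AddSubgroup.zmultiples (1:ℝ) :=
        QuotientAddGroup.eq.mp (h' i)
      obtain ⟨k, hk⟩ := AddSubgroup.mem_zmultiples_iff.mp hmem
      refine ⟨k, ?_⟩
      simp only [zsmul_eq_mul, mul_one] at hk
      linarith
    choose m hm using h2
    exact ⟨m, hm⟩
  · rintro ⟨m, hm⟩
    funext i
    show (x i : AddCircle (1:ℝ)) = (y i : AddCircle (1:ℝ))
    rw [hm i]
    exact (coe_addCircle_int (x i) (m i)).symm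

lemma isOpenMap_torusProj3 : IsOpenMap torusProj3 := by
  have h : torusProj3 = Pi.map (fun _ : Fin 3 => ((↑) : ℝ → AddCircle (1:ℝ))) := rfl
  rw [h]
  exact IsOpenMap.piMap
    (fun _ => QuotientAddGroup.isOpenQuotientMap_mk.isOpenMap)
    (Filter.Eventually.of_forall fun _ => QuotientAddGroup.isOpenQuotientMap_mk.surjective)

lemma image_closed_of_saturated {A : Set (Fin 3 → ℝ)} (hA : IsClosed A)
    (hsat : ∀ (x : Fin 3 → ℝ) (m : Fin 3 → ℤ), x ∈ A → (fun i => x i + m i) ∈ A) :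
    IsClosed (torusProj3 '' A) := by
  rw [← isOpen_compl_iff]
  have hcompl : (torusProj3 '' A)ᶜ = torusProj3 '' Aᶜ := by
    ext p
    constructor
    · intro hp
      obtain ⟨x, hx⟩ := exists_rep p
      refine ⟨x, ?_, hx⟩
      intro hxA
      exact hp ⟨x, hxA, hx⟩
    · rintro ⟨x, hxA, rfl⟩ ⟨y, hyA, hyx⟩
      apply hxA
      obtain ⟨m, hm⟩ := (torus_eq_iff y x).mp hyx
      have := hsat y m hyA
      have hxy : (fun i => y i + (m i : ℝ)) = x := funext fun i => (hm i).symm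
      rwa [hxy] at this
  rw [hcompl]
  exact isOpenMap_torusProj3 _ hA.isOpen_compl

lemma U_surjective {μ : Fin 3 → ℤ} {U : (Fin 3 → ℝ) → ℝ} (hUc : Continuous U)
    (hUper : ∀ (x : Fin 3 → ℝ) (m : Fin 3 → ℤ),
      U (x + fun i => (m i : ℝ)) = U x + ∑ i, (μ i : ℝ) * (m i : ℝ))
    {i₀ : Fin 3} (hi₀ : μ i₀ ≠ 0) (r : ℝ) : ∃ x, U x = r := by
  obtain ⟨j, hj⟩ := exists_ne i₀
  set L : ℝ → (Fin 3 → ℝ) := fun t k => t * (if k = i₀ then 1 else 0) with hL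
  have hLc : Continuous (U ∘ L) := by
    apply hUc.comp
    apply continuous_pi
    intro k
    exact continuous_id.mul continuous_const
  have hLN : ∀ N : ℤ, U (L N) = U (L 0) + (μ i₀ : ℝ) * N := by
    intro N
    have h1 : L (N : ℝ) = L 0 + (fun k => (((if k = i₀ then N else if k = j then 0 else 0 : ℤ)) : ℝ)) := by
      funext k
      simp only [hL, Pi.add_apply, zero_mul, zero_add]
      by_cases h1 : k = i₀
      · simp [h1]
      · by_cases h2 : k = j <;> simp [h1, h2]
    rw [h1, hUper (L 0)]
    congr 1
    have := sum_mv μ (Ne.symm hj) N 0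
    have hcast : ∑ k, (μ k : ℝ) * (((if k = i₀ then N else if k = j then 0 else 0 : ℤ)) : ℝ)
        = ((∑ k, μ k * (if k = i₀ then N else if k = j then 0 else 0) : ℤ) : ℝ) := by
      push_cast
      rfl
    rw [hcast, this]
    push_cast
    ring
  set q : ℝ := (μ i₀ : ℝ) with hq
  have hq0 : q ≠ 0 := Int.cast_ne_zero.mpr hi₀
  set s : ℝ := (r - U (L 0)) / q with hs
  have hqs : q * s = r - U (L 0) := by
    rw [hs]; field_simp
  obtain ⟨N₁, N₂, hN₁, hN₂⟩ : ∃ N₁ N₂ : ℤ, U (L N₁) ≤ r ∧ r ≤ U (L N₂) := by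
    rcases lt_or_gt_of_ne hq0 with hqneg | hqpos
    · refine ⟨⌈s⌉, ⌊s⌋, ?_, ?_⟩
      · rw [hLN]
        have : q * (⌈s⌉ : ℝ) ≤ q * s := mul_le_mul_of_nonpos_left (Int.le_ceil s) hqneg.le
        rw [hqs] at this
        linarith
      · rw [hLN]
        have : q * s ≤ q * (⌊s⌋ : ℝ) := mul_le_mul_of_nonpos_left (Int.floor_le s) hqneg.le
        rw [hqs] at this
        linarith
    · refine ⟨⌊s⌋, ⌈s⌉, ?_, ?_⟩
      · rw [hLN]
        have : q * (⌊s⌋ : ℝ) ≤ q * s := mul_le_mul_of_nonneg_left (Int.floor_le s) hqpos.le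
        rw [hqs] at this
        linarith
      · rw [hLN]
        have : q * s ≤ q * (⌈s⌉ : ℝ) := mul_le_mul_of_nonneg_left (Int.le_ceil s) hqpos.le
        rw [hqs] at this
        linarith
  have hmem : r ∈ Set.uIcc (U (L N₁)) (U (L N₂)) := Set.mem_uIcc.mpr (Or.inl ⟨hN₁, hN₂⟩)
  have := intermediate_value_uIcc (a := (N₁ : ℝ)) (b := (N₂ : ℝ)) hLc.continuousOn
  obtain ⟨t, _, ht⟩ := this hmem
  exact ⟨L t, ht⟩

lemma gcd_eq_one {μ : Fin 3 → ℤ} {U : (Fin 3 → ℝ) → ℝ} (hUc : Continuous U)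
    (hUper : ∀ (x : Fin 3 → ℝ) (m : Fin 3 → ℤ),
      U (x + fun i => (m i : ℝ)) = U x + ∑ i, (μ i : ℝ) * (m i : ℝ))
    (hμ : μ ≠ 0)
    (hconn : IsConnected (torusProj3 '' {x | ∃ z : ℤ, U x = (z : ℝ)})) :
    Finset.univ.gcd μ = 1 := by
  set d : ℤ := Finset.univ.gcd μ with hd
  have hdvd : ∀ k, d ∣ μ k := fun k => Finset.gcd_dvd (Finset.mem_univ k)
  have hd0 : 0 ≤ d := Int.nonneg_of_normalize_eq_self Finset.normalize_gcd
  have hdne : d ≠ 0 := by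
    intro h
    apply hμ
    funext k
    exact Finset.gcd_eq_zero_iff.mp h k (Finset.mem_univ k)
  by_contra hne
  have hd2 : 2 ≤ d := by omega
  obtain ⟨i₀, hi₀⟩ : ∃ i₀, μ i₀ ≠ 0 := by
    by_contra hco
    push_neg at hco
    exact hμ (funext hco)
  -- the pieces
  set A : ℤ → Set (Fin 3 → ℝ) := fun j => {x | ∃ z : ℤ, U x = (d : ℝ) * z + j} with hA
  set T : ℤ → Set (Fin 3 → AddCircle (1:ℝ)) := fun j => torusProj3 '' A j with hT
  set S : Set (Fin 3 → AddCircle (1:ℝ)) := torusProj3 '' {x | ∃ z : ℤ, U x = (z : ℝ)} with hS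
  -- periodicity of U modulo d
  have hshift : ∀ (x : Fin 3 → ℝ) (m : Fin 3 → ℤ), ∃ K : ℤ,
      U (fun i => x i + m i) = U x + (d : ℝ) * K := by
    intro x m
    have hsum : ∃ K : ℤ, (∑ k, μ k * m k) = d * K := by
      refine (Finset.dvd_sum fun k _ => Dvd.dvd.mul_right (hdvd k) (m k)).elim
        fun K hK => ⟨K, hK⟩
    obtain ⟨K, hK⟩ := hsum
    refine ⟨K, ?_⟩
    have := hUper x m
    rw [show (x + fun i => ((m i : ℤ) : ℝ)) = fun i => x i + m i from rfl] at this
    rw [this]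
    congr 1
    have : ∑ k, (μ k : ℝ) * (m k : ℝ) = ((∑ k, μ k * m k : ℤ) : ℝ) := by push_cast; rfl
    rw [this, hK]
    push_cast
    ring
  -- each T j is closed
  have hTcl : ∀ j, IsClosed (T j) := by
    intro j
    apply image_closed_of_saturated
    · have : A j = (fun x => (U x - (j:ℝ)) / d) ⁻¹' (Set.range ((↑) : ℤ → ℝ)) := by
        ext x
        simp only [hA, Set.mem_setOf_eq, Set.mem_preimage, Set.mem_range]
        constructor
        · rintro ⟨z, hz⟩
          refine ⟨z, ?_⟩
          rw [hz]
          field_simp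
          ring
        · rintro ⟨z, hz⟩
          refine ⟨z, ?_⟩
          have hdR : (d:ℝ) ≠ 0 := Int.cast_ne_zero.mpr hdne
          field_simp at hz
          linarith
      rw [this]
      exact IsClosed.preimage (by fun_prop) Int.isClosedEmbedding_coe_real.isClosed_range
    · intro x m hx
      obtain ⟨z, hz⟩ := hx
      obtain ⟨K, hK⟩ := hshift x m
      exact ⟨z + K, by rw [hK, hz]; push_cast; ring⟩
  -- each T j is nonempty
  have hTne : ∀ j : ℤ, (T j).Nonempty := by
    intro j
    obtain ⟨x, hx⟩ := U_surjective hUc hUper hi₀ (j : ℝ)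
    exact ⟨torusProj3 x, ⟨x, ⟨0, by rw [hx]; push_cast; ring⟩, rfl⟩⟩
  -- each T j is inside S
  have hTsub : ∀ j : ℤ, T j ⊆ S := by
    intro j p
    rintro ⟨x, ⟨z, hz⟩, rfl⟩
    exact ⟨x, ⟨d * z + j, by rw [hz]; push_cast; ring⟩, rfl⟩
  -- distinct pieces are disjoint
  have hTdisj : ∀ j j' : ℤ, 0 ≤ j → j < d → 0 ≤ j' → j' < d → j ≠ j' →
      T j ∩ T j' = ∅ := by
    intro j j' h0 h1 h0' h1' hjj
    rw [Set.eq_empty_iff_forall_notMem]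
    rintro p ⟨⟨x, ⟨z, hz⟩, rfl⟩, ⟨y, ⟨z', hz'⟩, hyx⟩⟩
    obtain ⟨m, hm⟩ := (torus_eq_iff y x).mp hyx
    obtain ⟨K, hK⟩ := hshift y m
    have hxy : (fun i => y i + (m i : ℝ)) = x := funext fun i => (hm i).symm
    rw [hxy] at hK
    rw [hz, hz'] at hK
    have hcast : ((d * z + j : ℤ) : ℝ) = ((d * z' + j' + d * K : ℤ) : ℝ) := by
      push_cast
      linarith
    have hZ : d * z + j = d * z' + j' + d * K := Int.cast_injective hcast
    have hdvd' : d ∣ (j - j') := ⟨z' + K - z, by linarith⟩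
    have := Int.eq_zero_of_abs_lt_dvd hdvd' (by rw [abs_lt]; omega)
    omega
  -- assemble the separation
  set C : Set (Fin 3 → AddCircle (1:ℝ)) := T 0 with hC
  set D : Set (Fin 3 → AddCircle (1:ℝ)) := ⋃ j ∈ Finset.Icc (1:ℤ) (d-1), T j with hD
  have hDcl : IsClosed D :=
    Set.Finite.isClosed_biUnion (Finset.Icc (1:ℤ) (d-1)).finite_toSet
      (fun j _ => hTcl j)
  have hcover : S ⊆ C ∪ D := by
    rintro p ⟨x, ⟨z, hz⟩, rfl⟩
    have hdpos : 0 < d := by omega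
    obtain ⟨k, j, hzkj, hj0, hjd⟩ : ∃ k j : ℤ, z = d * k + j ∧ 0 ≤ j ∧ j < d :=
      ⟨z / d, z % d, (Int.mul_ediv_add_emod z d).symm, Int.emod_nonneg z hdne,
        Int.emod_lt_of_pos z hdpos⟩
    have hxj : torusProj3 x ∈ T j :=
      ⟨x, ⟨k, by rw [hz, hzkj]; push_cast; ring⟩, rfl⟩
    rcases eq_or_ne j 0 with hj' | hj'
    · left
      rwa [hj'] at hxj
    · right
      rw [hD]
      exact Set.mem_iUnion₂.mpr ⟨j, Finset.mem_Icc.mpr ⟨by omega, by omega⟩, hxj⟩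
  have hSC : (S ∩ C).Nonempty := by
    obtain ⟨p, hp⟩ := hTne 0
    exact ⟨p, hTsub 0 hp, hp⟩
  have hSD : (S ∩ D).Nonempty := by
    obtain ⟨p, hp⟩ := hTne 1
    refine ⟨p, hTsub 1 hp, ?_⟩
    rw [hD]
    exact Set.mem_iUnion₂.mpr ⟨1, Finset.mem_Icc.mpr ⟨by omega, by omega⟩, hp⟩
  have hempty : S ∩ (C ∩ D) = ∅ := by
    rw [Set.eq_empty_iff_forall_notMem]
    rintro p ⟨_, hpC, hpD⟩
    rw [hD] at hpD
    obtain ⟨j, hjmem, hpj⟩ := Set.mem_iUnion₂.mp hpD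
    rw [Finset.mem_Icc] at hjmem
    have := hTdisj 0 j (le_refl 0) (by omega) (by omega) (by omega) (by omega)
    rw [Set.eq_empty_iff_forall_notMem] at this
    exact this p ⟨hpC, hpj⟩
  obtain ⟨p, hp⟩ := isPreconnected_closed_iff.mp hconn.isPreconnected C D
    (hTcl 0) hDcl hcover hSC hSD
  rw [Set.eq_empty_iff_forall_notMem] at hempty
  exact hempty p ⟨hp.1, hp.2.1, hp.2.2⟩

lemma arith (μ ν : Fin 3 → ℤ) (hν : ν ≠ 0)
    (hgμ : Finset.univ.gcd μ = 1) (hgν : Finset.univ.gcd ν = 1)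
    (hcross : ∀ i j, μ i * ν j = μ j * ν i) : μ = ν ∨ μ = -ν := by
  obtain ⟨i₀, hq0⟩ : ∃ i₀, ν i₀ ≠ 0 := by
    by_contra hco
    push_neg at hco
    exact hν (funext hco)
  set p : ℤ := μ i₀ with hp
  set q : ℤ := ν i₀ with hq
  have hkey : ∀ i, q * μ i = p * ν i := by
    intro i
    have h := hcross i i₀
    linear_combination h
  have hgcdpos : 0 < Int.gcd p q := by
    rcases Nat.eq_zero_or_pos (Int.gcd p q) with h | h
    · exfalso
      exact hq0 ((Int.gcd_eq_zero_iff.mp h).2)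
    · exact h
  set e : ℤ := (Int.gcd p q : ℤ) with he
  have he0 : e ≠ 0 := by
    simp only [he]
    exact_mod_cast hgcdpos.ne'
  set p' : ℤ := p / e with hp'
  set q' : ℤ := q / e with hq'
  have hpE : e * p' = p := Int.mul_ediv_cancel' (Int.gcd_dvd_left _ _)
  have hqE : e * q' = q := Int.mul_ediv_cancel' (Int.gcd_dvd_right _ _)
  have hcop : IsCoprime p' q' := by
    rw [Int.isCoprime_iff_gcd_eq_one]
    exact Int.gcd_div_gcd_div_gcd hgcdpos
  have hkey' : ∀ i, q' * μ i = p' * ν i := by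
    intro i
    have h2 : e * (q' * μ i) = e * (p' * ν i) := by
      linear_combination hkey i + (μ i) * hqE - (ν i) * hpE
    exact mul_left_cancel₀ he0 h2
  have hp'd : ∀ i, p' ∣ μ i := by
    intro i
    have h1 : p' ∣ q' * μ i := ⟨ν i, (hkey' i).symm ▸ rfl⟩
    have h2 : p' ∣ μ i * q' := by rwa [mul_comm] at h1
    exact hcop.dvd_of_dvd_mul_right h2
  have hq'd : ∀ i, q' ∣ ν i := by
    intro i
    have h1 : q' ∣ p' * ν i := ⟨μ i, by linear_combination - hkey' i⟩
    have h2 : q' ∣ ν i * p' := by rwa [mul_comm] at h1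
    exact hcop.symm.dvd_of_dvd_mul_right h2
  have hp'u : p' = 1 ∨ p' = -1 := by
    apply Int.isUnit_iff.mp
    apply isUnit_of_dvd_one
    rw [← hgμ]
    exact Finset.dvd_gcd fun i _ => hp'd i
  have hq'u : q' = 1 ∨ q' = -1 := by
    apply Int.isUnit_iff.mp
    apply isUnit_of_dvd_one
    rw [← hgν]
    exact Finset.dvd_gcd fun i _ => hq'd i
  rcases hp'u with hp1 | hp1 <;> rcases hq'u with hq1 | hq1
  · left
    funext i
    have := hkey' i
    rw [hp1, hq1] at this
    linarith
  · right
    funext i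
    have := hkey' i
    rw [hp1, hq1] at this
    simp only [Pi.neg_apply]
    linarith
  · right
    funext i
    have := hkey' i
    rw [hp1, hq1] at this
    simp only [Pi.neg_apply]
    linarith
  · left
    funext i
    have := hkey' i
    rw [hp1, hq1] at this
    linarith

end Stmt7

/- STATEMENT 7: Two disjoint closed connected embedded orientable surfaces
M₁, M₂ ⊂ 𝕋³, each with nonzero class in H₂(𝕋³,ℤ) ≅ ℤ³, satisfy [M₁] = ±[M₂].
Each surface is presented, via Poincaré duality, as the regular zero set in 𝕋³
of a circle-valued map of class μ resp. ν, i.e. as the image of U⁻¹(ℤ) where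
U : ℝ³ → ℝ is smooth with U(x + m) = U(x) + ⟨μ, m⟩, every integer a regular
value. If the two surfaces are connected, disjoint, and μ, ν ≠ 0, then μ = ±ν. -/
theorem stmt_7 (μ ν : Fin 3 → ℤ) (hμ : μ ≠ 0) (hν : ν ≠ 0)
    (U V : (Fin 3 → ℝ) → ℝ) (hU : ContDiff ℝ (⊤ : ℕ∞) U) (hV : ContDiff ℝ (⊤ : ℕ∞) V)
    (hUper : ∀ (x : Fin 3 → ℝ) (m : Fin 3 → ℤ),
      U (x + fun i => (m i : ℝ)) = U x + ∑ i, (μ i : ℝ) * (m i : ℝ))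
    (hVper : ∀ (x : Fin 3 → ℝ) (m : Fin 3 → ℤ),
      V (x + fun i => (m i : ℝ)) = V x + ∑ i, (ν i : ℝ) * (m i : ℝ))
    (hUreg : ∀ x : Fin 3 → ℝ, (∃ z : ℤ, U x = (z : ℝ)) → fderiv ℝ U x ≠ 0)
    (hVreg : ∀ x : Fin 3 → ℝ, (∃ z : ℤ, V x = (z : ℝ)) → fderiv ℝ V x ≠ 0)
    (hUconn : IsConnected (torusProj3 '' {x | ∃ z : ℤ, U x = (z : ℝ)}))
    (hVconn : IsConnected (torusProj3 '' {x | ∃ z : ℤ, V x = (z : ℝ)}))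
    (hdisj : torusProj3 '' {x | ∃ z : ℤ, U x = (z : ℝ)} ∩
             torusProj3 '' {x | ∃ z : ℤ, V x = (z : ℝ)} = ∅) :
    μ = ν ∨ μ = -ν := by
  have hpt : ∀ x, ¬((∃ z : ℤ, U x = (z:ℝ)) ∧ (∃ z : ℤ, V x = (z:ℝ))) := by
    rintro x ⟨hU', hV'⟩
    have hmem : torusProj3 x ∈ torusProj3 '' {x | ∃ z : ℤ, U x = (z : ℝ)} ∩
        torusProj3 '' {x | ∃ z : ℤ, V x = (z : ℝ)} := ⟨⟨x, hU', rfl⟩, ⟨x, hV', rfl⟩⟩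
    rw [hdisj] at hmem
    exact hmem
  have hcross := Stmt7.cross_vanish μ ν U V (hU.of_le (by simp)) (hV.of_le (by simp))
    hUper hVper hpt
  have hgμ := Stmt7.gcd_eq_one hU.continuous hUper hμ hUconn
  have hgν := Stmt7.gcd_eq_one hV.continuous hVper hν hVconn
  exact Stmt7.arith μ ν hν hgμ hgν hcross
end
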